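/- arXiv:cs/0408066 — 2 statements merged into one kernel-verified Lean document; each statement's English description precedes it below -/
import Mathlib

section
/- In the inconsistency graph G built from r ∈ Σ^{[n]^m} and closest-codeword assignments c_{b,i} ∈ C^{m-1}, every edge is incident to a vertex of degree at least (m−2)d/2. Consequently, the planes (b,i) whose degree in G is less than (m−2)d/2 form an independent set. -/
/-- Relative Hamming distance between two words indexed by a finite type. -/
noncomputable def relHammingDist {ι F : Type} [Fintype ι] [DecidableEq F] (x y : ι → F) : ℝ :=
  (hammingDist x y : ℝ) / (Fintype.card ι)

/-- Relative Hamming distance from a word to (the nearest codeword of) a code. -/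
noncomputable def distToCode {ι F : Type} [Fintype ι] [DecidableEq F] (C : Set (ι → F)) (r : ι → F) : ℝ :=
  sInf (relHammingDist r '' C)

/-- Minimum Hamming distance of a code. -/
noncomputable def minDist {ι F : Type} [Fintype ι] [DecidableEq F] (C : Set (ι → F)) : ℕ :=
  sInf {e | ∃ x ∈ C, ∃ y ∈ C, x ≠ y ∧ hammingDist x y = e}

/-- The `m`-fold tensor power `C^m` of a code `C ⊆ F^n`. -/
def tensorPow {F : Type} {n : ℕ} (C : Set (Fin n → F)) (m : ℕ) :
    Set ((Fin m → Fin n) → F) :=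
  {r | ∀ (b : Fin m) (x : Fin m → Fin n), (fun i => r (Function.update x b i)) ∈ C}

/-- The slice `r_{b,i}`: fix the `b`-th coordinate of the array to `i`. -/
def sliceAt {F : Type} {n m : ℕ} (r : (Fin (m + 1) → Fin n) → F) (b : Fin (m + 1)) (i : Fin n) :
    (Fin m → Fin n) → F :=
  fun x => r (b.insertNth i x)

/-- The inconsistency graph on the planes `[m] × [n]` (ambient dimension `mm+3`), for a
word `r`, threshold `τ` and an assignment of codewords `c b i ∈ C^{mm+2}` to planes:
`(b₁,i₁) ~ (b₂,i₂)` iff one of the two slices is more than `τ`-far from `C^{mm+2}`, or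
`b₁ ≠ b₂` and the two assigned codewords disagree at some common point `j ∈ [n]^{mm+3}`
(the view of `c b i` at `j` being obtained by deleting the `b`-th coordinate of `j`). -/
def InconsAdj {F : Type} [Fintype F] [DecidableEq F] {n mm : ℕ}
    (C : Set (Fin n → F)) (r : (Fin (mm + 3) → Fin n) → F) (τ : ℝ)
    (c : ∀ (_ : Fin (mm + 3)) (_ : Fin n), (Fin (mm + 2) → Fin n) → F)
    (v w : Fin (mm + 3) × Fin n) : Prop :=
  τ < distToCode (tensorPow C (mm + 2)) (sliceAt r v.1 v.2) ∨
  τ < distToCode (tensorPow C (mm + 2)) (sliceAt r w.1 w.2) ∨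
  (v.1 ≠ w.1 ∧ ∃ j : Fin (mm + 3) → Fin n, j v.1 = v.2 ∧ j w.1 = w.2 ∧
    c v.1 v.2 (fun t => j (v.1.succAbove t)) ≠ c w.1 w.2 (fun t => j (w.1.succAbove t)))


/-!
If one of the two planes of an edge is `τ`-far, it is adjacent to every other plane, so its
degree alone exceeds `(m - 2) d`. Otherwise the planes `v`, `w` lie in different directions and
their codewords disagree at a point `j` of their intersection. For each of the `m - 2` remaining
directions `b`, the lines through `j` in direction `b` read off the two codewords are codewords
of `C` that differ at `j b`, hence in at least `d` positions `i`; and wherever they differ, the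
codeword of the plane `(b, i)` disagrees with that of `v` or of `w` there. This gives `(m - 2) d`
distinct neighbours of `v` or `w`, so one of them has degree at least `(m - 2) d / 2`.
-/

open Finset Function

lemma minDist_le_card {ι F : Type} [Fintype ι] [DecidableEq F] (C : Set (ι → F)) :
    minDist C ≤ Fintype.card ι := by
  show sInf _ ≤ _
  rcases Set.eq_empty_or_nonempty {e | ∃ x ∈ C, ∃ y ∈ C, x ≠ y ∧ hammingDist x y = e}
    with h | h
  · rw [h, Nat.sInf_empty]
    exact Nat.zero_le _
  · obtain ⟨x, -, y, -, -, he⟩ := Nat.sInf_mem h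
    exact he ▸ hammingDist_le_card_fintype

lemma minDist_le_hammingDist {ι F : Type} [Fintype ι] [DecidableEq F] {C : Set (ι → F)}
    {x y : ι → F} (hx : x ∈ C) (hy : y ∈ C) (hxy : x ≠ y) :
    minDist C ≤ hammingDist x y :=
  Nat.sInf_le ⟨x, hx, y, hy, hxy, rfl⟩

lemma card_filter_ne_and_of_forall {V : Type*} [Fintype V] [DecidableEq V]
    {R : V → V → Prop} [DecidableRel R] {v : V} (h : ∀ w, w ≠ v → R v w) :
    #{w | w ≠ v ∧ R v w} = Fintype.card V - 1 := by
  rw [filter_congr fun w _ => and_iff_left_of_imp (h w), filter_ne',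
    card_erase_of_mem (mem_univ v), card_univ]

/-- Seen from a plane orthogonal to `a`, the line through `j` in a direction `b ≠ a` is an
axis-parallel line of `[n]^m`. -/
lemma mem_of_mem_tensorPow_of_ne {F : Type} {n m : ℕ} {C : Set (Fin n → F)}
    {x : (Fin m → Fin n) → F} (hx : x ∈ tensorPow C m) {a b : Fin (m + 1)} (hba : b ≠ a)
    (j : Fin (m + 1) → Fin n) :
    (fun i => x (fun t => update j b i (a.succAbove t))) ∈ C := by
  obtain ⟨t, rfl⟩ := Fin.exists_succAbove_eq hba
  simpa only [update_comp_eq_of_injective' j Fin.succAbove_right_injective t] using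
    hx t (fun s => j (a.succAbove s))

def planeView {F : Type} {n mm : ℕ}
    (c : ∀ (_ : Fin (mm + 3)) (_ : Fin n), (Fin (mm + 2) → Fin n) → F)
    (v : Fin (mm + 3) × Fin n) (j : Fin (mm + 3) → Fin n) : F :=
  c v.1 v.2 (fun t => j (v.1.succAbove t))

namespace InconsAdj

variable {F : Type} [Fintype F] [DecidableEq F] {n mm : ℕ} {C : Set (Fin n → F)}
  {r : (Fin (mm + 3) → Fin n) → F} {τ : ℝ}
  {c : ∀ (_ : Fin (mm + 3)) (_ : Fin n), (Fin (mm + 2) → Fin n) → F}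

open scoped Classical in
noncomputable def degree (C : Set (Fin n → F)) (r : (Fin (mm + 3) → Fin n) → F) (τ : ℝ)
    (c : ∀ (_ : Fin (mm + 3)) (_ : Fin n), (Fin (mm + 2) → Fin n) → F)
    (v : Fin (mm + 3) × Fin n) : ℕ :=
  #{w | w ≠ v ∧ InconsAdj C r τ c v w}

lemma adj_or_adj_of_planeView_ne {u v w : Fin (mm + 3) × Fin n} (hv : u.1 ≠ v.1)
    (hw : u.1 ≠ w.1) {j : Fin (mm + 3) → Fin n} (hju : j u.1 = u.2) (hjv : j v.1 = v.2)
    (hjw : j w.1 = w.2) (h : planeView c v j ≠ planeView c w j) :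
    InconsAdj C r τ c v u ∨ InconsAdj C r τ c w u := by
  by_cases hvu : planeView c v j = planeView c u j
  · exact Or.inr (Or.inr (Or.inr ⟨hw.symm, j, hjw, hju, fun hwu => h (hvu.trans hwu.symm)⟩))
  · exact Or.inl (Or.inr (Or.inr ⟨hv.symm, j, hjv, hju, hvu⟩))

lemma mul_minDist_le_degree_of_far {v : Fin (mm + 3) × Fin n}
    (hv : τ < distToCode (tensorPow C (mm + 2)) (sliceAt r v.1 v.2)) :
    (mm + 1) * minDist C ≤ degree C r τ c v := by
  classical
  have hdeg : degree C r τ c v = (mm + 3) * n - 1 := by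
    rw [degree, card_filter_ne_and_of_forall (R := InconsAdj C r τ c) fun _ _ => Or.inl hv]
    simp
  have hd : minDist C ≤ n := by simpa using minDist_le_card C
  have hn : 0 < n := v.2.pos
  have hsplit : (mm + 3) * n = (mm + 1) * n + 2 * n := by ring
  rw [hdeg]
  calc (mm + 1) * minDist C ≤ (mm + 1) * n := Nat.mul_le_mul_left _ hd
    _ ≤ (mm + 3) * n - 1 := by omega

open scoped Classical in
lemma mul_minDist_le_degree_add_degree_of_planeView_ne
    (hc : ∀ b i, c b i ∈ tensorPow C (mm + 2)) {v w : Fin (mm + 3) × Fin n} (hvw : v.1 ≠ w.1)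
    {j : Fin (mm + 3) → Fin n} (hjv : j v.1 = v.2) (hjw : j w.1 = w.2)
    (h : planeView c v j ≠ planeView c w j) :
    (mm + 1) * minDist C ≤ degree C r τ c v + degree C r τ c w := by
  let B : Finset (Fin (mm + 3)) := {v.1, w.1}ᶜ
  let line (u : Fin (mm + 3) × Fin n) (b : Fin (mm + 3)) (i : Fin n) : F :=
    planeView c u (update j b i)
  let P := B.sigma fun b => ({i | line v b i ≠ line w b i} : Finset (Fin n))
  have hB : #B = mm + 1 := by
    rw [card_compl, Fintype.card_fin, card_pair hvw]
    omega
  have hline : ∀ b ∈ B, minDist C ≤ hammingDist (line v b) (line w b) := by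
    intro b hb
    simp only [B, mem_compl, mem_insert, mem_singleton, not_or] at hb
    refine minDist_le_hammingDist (mem_of_mem_tensorPow_of_ne (hc _ _) hb.1 j)
      (mem_of_mem_tensorPow_of_ne (hc _ _) hb.2 j) fun heq => h ?_
    simpa [line] using congrFun heq (j b)
  let N (u : Fin (mm + 3) × Fin n) : Finset (Fin (mm + 3) × Fin n) :=
    {x | x ≠ u ∧ InconsAdj C r τ c u x}
  have hP : ∀ p ∈ P, (p.1, p.2) ∈ N v ∪ N w := by
    rintro ⟨b, i⟩ hp
    simp only [P, B, mem_sigma, mem_compl, mem_insert, mem_singleton, not_or,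
      mem_filter_univ] at hp
    obtain ⟨⟨hbv, hbw⟩, hi⟩ := hp
    simp only [N, mem_union, mem_filter_univ]
    rcases adj_or_adj_of_planeView_ne (u := (b, i)) (r := r) (τ := τ) hbv hbw
      (update_self b i j) (by rwa [update_of_ne (Ne.symm hbv)])
      (by rwa [update_of_ne (Ne.symm hbw)]) hi with hadj | hadj
    · exact Or.inl ⟨fun he => hbv (congrArg Prod.fst he), hadj⟩
    · exact Or.inr ⟨fun he => hbw (congrArg Prod.fst he), hadj⟩
  calc (mm + 1) * minDist C = #B • minDist C := by rw [hB, smul_eq_mul]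
    _ ≤ ∑ b ∈ B, hammingDist (line v b) (line w b) := card_nsmul_le_sum _ _ _ hline
    _ = #P := (card_sigma _ _).symm
    _ ≤ #(N v ∪ N w) := card_le_card_of_injOn _ (fun p hp => hP p hp)
      (Equiv.sigmaEquivProd _ _).injective.injOn
    _ ≤ degree C r τ c v + degree C r τ c w := card_union_le _ _

lemma mul_minDist_le_degree_add_degree (hc : ∀ b i, c b i ∈ tensorPow C (mm + 2))
    {v w : Fin (mm + 3) × Fin n} (hadj : InconsAdj C r τ c v w) :
    (mm + 1) * minDist C ≤ degree C r τ c v + degree C r τ c w := by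
  rcases hadj with hv | hw | ⟨hvw, j, hjv, hjw, h⟩
  · exact (mul_minDist_le_degree_of_far hv).trans (Nat.le_add_right _ _)
  · exact (mul_minDist_le_degree_of_far hw).trans (Nat.le_add_left _ _)
  · exact mul_minDist_le_degree_add_degree_of_planeView_ne hc hvw hjv hjw h

end InconsAdj

open scoped Classical in
theorem inconsistency_graph_structure_general
    {F : Type} [Field F] [Fintype F] [DecidableEq F] {n d mm : ℕ}
    (C : Submodule F (Fin n → F))
    (hd : minDist (C : Set (Fin n → F)) = d)
    (r : (Fin (mm + 3) → Fin n) → F) (τ : ℝ)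
    (c : ∀ (_ : Fin (mm + 3)) (_ : Fin n), (Fin (mm + 2) → Fin n) → F)
    (hcmem : ∀ b i, c b i ∈ tensorPow (C : Set (Fin n → F)) (mm + 2)) :
    let Adj := InconsAdj (C : Set (Fin n → F)) r τ c
    let deg : (Fin (mm + 3) × Fin n) → ℕ := fun v =>
      (Finset.univ.filter (fun w => w ≠ v ∧ Adj v w)).card
    (∀ v w, v ≠ w → Adj v w →
      ((mm + 1) * d : ℝ) / 2 ≤ deg v ∨ ((mm + 1) * d : ℝ) / 2 ≤ deg w) ∧
    (∀ v w, v ≠ w → (deg v : ℝ) < ((mm + 1) * d : ℝ) / 2 →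
      (deg w : ℝ) < ((mm + 1) * d : ℝ) / 2 → ¬ Adj v w) := by
  intro Adj deg
  have edge : ∀ v w, Adj v w → ((mm + 1) * d : ℝ) ≤ deg v + deg w := fun v w hadj => by
    subst hd
    exact_mod_cast InconsAdj.mul_minDist_le_degree_add_degree hcmem hadj
  refine ⟨fun v w _ hadj => ?_, fun v w _ hv hw hadj => ?_⟩
  · by_contra! h
    linarith [edge v w hadj]
  · linarith [edge v w hadj]

open scoped Classical in
/-- In the inconsistency graph built from `r` and closest-codeword
assignments `c b i ∈ C^{m-1}` (ambient dimension `m = mm+3 ≥ 3`), every edge is incident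
to a vertex of degree at least `(m−2)d/2`; consequently the planes of degree less than
`(m−2)d/2` form an independent set. -/
theorem inconsistency_graph_structure
    {F : Type} [Field F] [Fintype F] [DecidableEq F] {n k d mm : ℕ}
    (C : Submodule F (Fin n → F))
    (hk : Module.finrank F C = k)
    (hd : minDist (C : Set (Fin n → F)) = d)
    (r : (Fin (mm + 3) → Fin n) → F) (τ : ℝ) (h0τ : 0 ≤ τ) (hτ1 : τ ≤ 1)
    (c : ∀ (_ : Fin (mm + 3)) (_ : Fin n), (Fin (mm + 2) → Fin n) → F)
    (hcmem : ∀ b i, c b i ∈ tensorPow (C : Set (Fin n → F)) (mm + 2))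
    (hclosest : ∀ b i, relHammingDist (sliceAt r b i) (c b i) =
      distToCode (tensorPow (C : Set (Fin n → F)) (mm + 2)) (sliceAt r b i)) :
    let Adj := InconsAdj (C : Set (Fin n → F)) r τ c
    let deg : (Fin (mm + 3) × Fin n) → ℕ := fun v =>
      (Finset.univ.filter (fun w => w ≠ v ∧ Adj v w)).card
    (∀ v w, v ≠ w → Adj v w →
      ((mm + 1) * d : ℝ) / 2 ≤ deg v ∨ ((mm + 1) * d : ℝ) / 2 ≤ deg w) ∧
    (∀ v w, v ≠ w → (deg v : ℝ) < ((mm + 1) * d : ℝ) / 2 →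
      (deg w : ℝ) < ((mm + 1) * d : ℝ) / 2 → ¬ Adj v w) :=
  inconsistency_graph_structure_general C hd r τ c hcmem
end

section
/- Independent sets give proximity: Let C be an [n,k,d] code, m ≥ 3, and let G be the inconsistency graph on vertex set [m]×[n] built from r ∈ Σ^{[n]^m}, threshold τ, and closest codewords c_{b,i} ∈ C^{m-1}. If G has an independent set I of size at least m(n−d) + d + 1, then δ_{C^m}(r) ≤ 1 − (|I|/(mn))·(1 − τ). -/
/-! By pigeonhole, `I` contains more than `n - d` parallel hyperplanes in each of two directions
`b₁ ≠ b₂`. A codeword of `C` is determined by its values on any `n - d + 1` coordinates, so the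
restriction of `C` to such a set has a linear left inverse `L`. Interpolating the codewords
`c_{b₁,i}` along direction `b₁` with `L` gives a word `w` all of whose lines lie in `C`;
consistency with the hyperplanes of direction `b₂` then forces `w` to agree with `c_v` on every
hyperplane `v ∈ I`. On each such hyperplane `r` and `w` agree on a `1 - τ` fraction of points, and
a point lies on at most `m` hyperplanes of `I`, which gives the bound. -/

open Finset

section Hamming

variable {ι F : Type} [Fintype ι] [DecidableEq F]

lemma relHammingDist_le_one (x y : ι → F) : relHammingDist x y ≤ 1 :=
  div_le_one_of_le₀ (mod_cast hammingDist_le_card_fintype) (Nat.cast_nonneg _)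

lemma distToCode_le_relHammingDist {C : Set (ι → F)} (r : ι → F) {w : ι → F} (hw : w ∈ C) :
    distToCode C r ≤ relHammingDist r w :=
  csInf_le ⟨0, by rintro _ ⟨u, -, rfl⟩; exact div_nonneg (Nat.cast_nonneg _) (Nat.cast_nonneg _)⟩
    ⟨w, hw, rfl⟩

lemma eq_of_eqOn_of_card_lt {C : Set (ι → F)} {u v : ι → F} (hu : u ∈ C) (hv : v ∈ C)
    {S : Finset ι} (hS : Fintype.card ι < minDist C + #S) (huv : ∀ i ∈ S, u i = v i) :
    u = v := by
  classical
  by_contra hne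
  have hmin : minDist C ≤ #{i | u i ≠ v i} := Nat.sInf_le ⟨u, hu, v, hv, hne, rfl⟩
  have hdisagree : #{i | u i ≠ v i} ≤ #Sᶜ :=
    card_le_card fun i hi => mem_compl.2 fun hiS => (mem_filter.1 hi).2 (huv i hiS)
  rw [card_compl] at hdisagree
  have := card_le_univ S
  omega

end Hamming

lemma sum_card_fiber_eq_card {α β : Type} [Fintype α] [Fintype β] [DecidableEq α] [DecidableEq β]
    (I : Finset (α × β)) : ∑ a, #{b | (a, b) ∈ I} = #I := by
  simp only [card_filter]
  rw [← Fintype.sum_prod_type' (f := fun a b => if (a, b) ∈ I then 1 else 0)]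
  simp

lemma exists_ne_lt_card_fiber {α β : Type} [Fintype α] [Fintype β] [DecidableEq α]
    [DecidableEq β] (I : Finset (α × β)) (K : ℕ)
    (hI : (Fintype.card α - 1) * K + Fintype.card β < #I) :
    ∃ a₁ a₂, a₁ ≠ a₂ ∧ K < #{b | (a₁, b) ∈ I} ∧ K < #{b | (a₂, b) ∈ I} := by
  set f : α → ℕ := fun a => #{b | (a, b) ∈ I}
  have : Nonempty α := by
    obtain ⟨v, -⟩ := card_pos.1 (Nat.zero_lt_of_lt hI)
    exact ⟨v.1⟩
  obtain ⟨a₁, -, hmax⟩ := exists_max_image univ f univ_nonempty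
  suffices ∃ a₂ ≠ a₁, K < f a₂ by
    obtain ⟨a₂, hne, hK⟩ := this
    exact ⟨a₁, a₂, hne.symm, hK.trans_le (hmax a₂ (mem_univ _)), hK⟩
  by_contra! hsmall
  have : ∑ a, f a ≤ Fintype.card β + (Fintype.card α - 1) * K := by
    rw [← add_sum_erase univ f (mem_univ a₁)]
    gcongr
    · exact card_le_univ _
    · simpa [card_erase_of_mem] using
        sum_le_card_nsmul (univ.erase a₁) f K fun a ha => hsmall a (ne_of_mem_erase ha)
  rw [sum_card_fiber_eq_card] at this
  omega

section Slices

variable {F : Type} {n m : ℕ}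

lemma sliceAt_removeNth (w : (Fin (m + 1) → Fin n) → F) (b : Fin (m + 1))
    (x : Fin (m + 1) → Fin n) : sliceAt w b (x b) (Fin.removeNth b x) = w x := by
  simp [sliceAt]

lemma sliceAt_mem_tensorPow {C : Set (Fin n → F)} {w : (Fin (m + 1) → Fin n) → F}
    (hw : w ∈ tensorPow C (m + 1)) (b : Fin (m + 1)) (i : Fin n) :
    sliceAt w b i ∈ tensorPow C m := fun t y => by
  simpa [sliceAt] using hw (b.succAbove t) (b.insertNth i y)

lemma eq_of_eqOn_slab [DecidableEq F] {C : Set (Fin n → F)} {u v : (Fin m → Fin n) → F}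
    (hu : u ∈ tensorPow C m) (hv : v ∈ tensorPow C m) (t : Fin m) {S : Finset (Fin n)}
    (hS : n < minDist C + #S) (huv : ∀ y, y t ∈ S → u y = v y) : u = v := by
  funext y
  have hline := eq_of_eqOn_of_card_lt (hu t y) (hv t y) (by rwa [Fintype.card_fin])
    fun i hi => huv _ (by simpa using hi)
  simpa using congrFun hline (y t)

/-- `c b i` is a word on the hyperplane `{x | x b = i}`, read through `Fin.removeNth b`;
`SlicesAgree c v w` says that the words on the hyperplanes `v` and `w` coincide where these meet. -/
def SlicesAgree (c : Fin (m + 1) → Fin n → (Fin m → Fin n) → F)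
    (v w : Fin (m + 1) × Fin n) : Prop :=
  ∀ x : Fin (m + 1) → Fin n, x v.1 = v.2 → x w.1 = w.2 →
    c v.1 v.2 (Fin.removeNth v.1 x) = c w.1 w.2 (Fin.removeNth w.1 x)

lemma sliceAt_eq_of_slicesAgree [DecidableEq F] {C : Set (Fin n → F)}
    {w : (Fin (m + 1) → Fin n) → F} (hw : w ∈ tensorPow C (m + 1))
    {c : Fin (m + 1) → Fin n → (Fin m → Fin n) → F} {b b' : Fin (m + 1)} (hbb' : b ≠ b')
    {i : Fin n} (hc : c b i ∈ tensorPow C m) {S : Finset (Fin n)} (hS : n < minDist C + #S)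
    (hslab : ∀ j ∈ S, sliceAt w b' j = c b' j) (hagree : ∀ j ∈ S, SlicesAgree c (b, i) (b', j)) :
    sliceAt w b i = c b i := by
  obtain ⟨t, rfl⟩ := Fin.exists_succAbove_eq hbb'.symm
  refine eq_of_eqOn_slab (sliceAt_mem_tensorPow hw b i) hc t hS fun y hy => ?_
  set x : Fin (m + 1) → Fin n := b.insertNth i y
  have hxb : x b = i := Fin.insertNth_apply_same _ _ _
  have hxb' : x (b.succAbove t) = y t := Fin.insertNth_apply_succAbove _ _ _ _
  calc sliceAt w b i y = sliceAt w (b.succAbove t) (y t) (Fin.removeNth _ x) := by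
        rw [← hxb', sliceAt_removeNth]; rfl
    _ = c b i (Fin.removeNth b x) := by rw [hslab _ hy, hagree _ hy x hxb hxb']
    _ = c b i y := by simp [x]

end Slices

section Linear

variable {F : Type} [Field F] {n : ℕ}

lemma mem_of_forall_column_mem (C : Submodule F (Fin n → F)) {ι : Type} [Fintype ι]
    [DecidableEq ι] (φ : (ι → F) →ₗ[F] F) (g : Fin n → ι → F)
    (hg : ∀ s, (fun j => g j s) ∈ C) : (fun j => φ (g j)) ∈ C := by
  have : (fun j => φ (g j)) = ∑ s, φ (fun t => if s = t then 1 else 0) • fun j => g j s := by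
    funext j
    simp [φ.pi_apply_eq_sum_univ (g j), mul_comm]
  rw [this]
  exact sum_mem fun s _ => C.smul_mem _ (hg s)

lemma exists_leftInverse_restrict [DecidableEq F] (C : Submodule F (Fin n → F))
    (S : Finset (Fin n)) (hS : n < minDist (C : Set (Fin n → F)) + #S) :
    ∃ L : (S → F) →ₗ[F] (Fin n → F), (∀ v, L v ∈ C) ∧ ∀ u ∈ C, L (fun s => u s) = u := by
  let res : C →ₗ[F] (S → F) := LinearMap.funLeft F F Subtype.val ∘ₗ C.subtype
  have hinj : LinearMap.ker res = ⊥ := LinearMap.ker_eq_bot.2 fun u v huv =>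
    Subtype.ext <| eq_of_eqOn_of_card_lt u.2 v.2 (by rwa [Fintype.card_fin])
      fun i hi => congrFun huv ⟨i, hi⟩
  obtain ⟨g, hg⟩ := res.exists_leftInverse_of_injective hinj
  exact ⟨C.subtype ∘ₗ g, fun v => (g v).2,
    fun u hu => congrArg Subtype.val (LinearMap.congr_fun hg ⟨u, hu⟩)⟩

variable {m : ℕ}

def extendFromSlices {S : Finset (Fin n)} (L : (S → F) →ₗ[F] (Fin n → F)) (b : Fin (m + 1))
    (f : Fin n → (Fin m → Fin n) → F) : (Fin (m + 1) → Fin n) → F :=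
  fun x => L (fun s => f s (Fin.removeNth b x)) (x b)

lemma extendFromSlices_mem_tensorPow (C : Submodule F (Fin n → F)) {S : Finset (Fin n)}
    {L : (S → F) →ₗ[F] (Fin n → F)} (hL : ∀ v, L v ∈ C) (b : Fin (m + 1))
    {f : Fin n → (Fin m → Fin n) → F} (hf : ∀ s ∈ S, f s ∈ tensorPow (C : Set _) m) :
    extendFromSlices L b f ∈ tensorPow (C : Set _) (m + 1) := by
  intro b' x
  rcases eq_or_ne b' b with rfl | hb'
  · simpa [extendFromSlices] using hL _
  · obtain ⟨t, rfl⟩ := Fin.exists_succAbove_eq hb'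
    simpa [extendFromSlices, Function.update_of_ne hb'] using
      mem_of_forall_column_mem C (LinearMap.proj (x b) ∘ₗ L)
        (fun i s => f s (Function.update (Fin.removeNth b x) t i)) fun s => hf s s.2 t _

lemma sliceAt_extendFromSlices [DecidableEq F] {C : Submodule F (Fin n → F)}
    {S : Finset (Fin n)} {L : (S → F) →ₗ[F] (Fin n → F)}
    (hL : ∀ u ∈ C, L (fun s => u s) = u) {c : Fin (m + 1) → Fin n → (Fin m → Fin n) → F}
    {b₁ b₂ : Fin (m + 1)} (hb : b₁ ≠ b₂) {j : Fin n} (hc : c b₂ j ∈ tensorPow (C : Set _) m)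
    (hagree : ∀ s ∈ S, SlicesAgree c (b₁, s) (b₂, j)) :
    sliceAt (extendFromSlices L b₁ (c b₁)) b₂ j = c b₂ j := by
  obtain ⟨t, ht⟩ := Fin.exists_succAbove_eq hb
  funext y
  set x : Fin (m + 1) → Fin n := b₂.insertNth j y
  set u : Fin n → F := fun i => c b₂ j (Function.update y t i)
  have hrestrict : (fun s : S => c b₁ s (Fin.removeNth b₁ x)) = fun s : S => u s := by
    funext s
    set x' := Function.update x b₁ s
    calc c b₁ s (Fin.removeNth b₁ x) = c b₁ s (Fin.removeNth b₁ x') := by simp [x']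
      _ = c b₂ j (Fin.removeNth b₂ x') :=
        hagree s s.2 x' (by simp [x']) (by simp [x', Function.update_of_ne hb.symm, x])
      _ = u s := by simp [x', u, x, ← ht]
  calc sliceAt (extendFromSlices L b₁ (c b₁)) b₂ j y = u (x b₁) := by
        rw [sliceAt, extendFromSlices, hrestrict, hL u (hc t y)]
    _ = c b₂ j y := by simp [u, x, ← ht]

theorem exists_mem_tensorPow_sliceAt_eq [DecidableEq F]
    (C : Submodule F (Fin n → F)) (c : Fin (m + 1) → Fin n → (Fin m → Fin n) → F)
    (I : Finset (Fin (m + 1) × Fin n)) (hc : ∀ v ∈ I, c v.1 v.2 ∈ tensorPow (C : Set _) m)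
    (hagree : ∀ v ∈ I, ∀ w ∈ I, v.1 ≠ w.1 → SlicesAgree c v w) {b₁ b₂ : Fin (m + 1)}
    (hb : b₁ ≠ b₂) (h₁ : n < minDist (C : Set (Fin n → F)) + #{i | (b₁, i) ∈ I})
    (h₂ : n < minDist (C : Set (Fin n → F)) + #{i | (b₂, i) ∈ I}) :
    ∃ w ∈ tensorPow (C : Set _) (m + 1), ∀ v ∈ I, sliceAt w v.1 v.2 = c v.1 v.2 := by
  have mem_of_mem_fiber {b : Fin (m + 1)} {i : Fin n} (hi : i ∈ ({i | (b, i) ∈ I} : Finset _)) :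
      (b, i) ∈ I :=
    (mem_filter.1 hi).2
  obtain ⟨L, hLC, hL⟩ := exists_leftInverse_restrict C _ h₁
  set w := extendFromSlices L b₁ (c b₁)
  have hw : w ∈ tensorPow (C : Set _) (m + 1) :=
    extendFromSlices_mem_tensorPow C hLC b₁ fun s hs => hc _ (mem_of_mem_fiber hs)
  have hslab₂ (j : Fin n) (hj : j ∈ ({i | (b₂, i) ∈ I} : Finset _)) : sliceAt w b₂ j = c b₂ j :=
    sliceAt_extendFromSlices hL hb (hc _ (mem_of_mem_fiber hj))
      fun s hs => hagree _ (mem_of_mem_fiber hs) _ (mem_of_mem_fiber hj) hb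
  have hoff₂ (v) (hv : v ∈ I) (hvb : v.1 ≠ b₂) : sliceAt w v.1 v.2 = c v.1 v.2 :=
    sliceAt_eq_of_slicesAgree hw hvb (hc v hv) h₂ hslab₂
      fun j hj => hagree v hv _ (mem_of_mem_fiber hj) hvb
  refine ⟨w, hw, fun v hv => ?_⟩
  by_cases hvb : v.1 = b₂
  · have hvb₁ : v.1 ≠ b₁ := hvb ▸ hb.symm
    exact sliceAt_eq_of_slicesAgree hw hvb₁ (hc v hv) h₁
      (fun i hi => hoff₂ _ (mem_of_mem_fiber hi) hb)
      fun i hi => hagree v hv _ (mem_of_mem_fiber hi) hvb₁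
  · exact hoff₂ v hv hvb

end Linear

section Counting

variable {F : Type} [DecidableEq F] {n m : ℕ}

lemma sum_hammingDist_sliceAt (r w : (Fin (m + 1) → Fin n) → F) (b : Fin (m + 1)) :
    ∑ i, hammingDist (sliceAt r b i) (sliceAt w b i) = hammingDist r w := by
  simp only [hammingDist, card_filter]
  rw [← Fintype.sum_prod_type', ← (Fin.insertNthEquiv (fun _ => Fin n) b).sum_comp]
  rfl

lemma relHammingDist_le_of_sliceAt (r w : (Fin (m + 1) → Fin n) → F)
    (I : Finset (Fin (m + 1) × Fin n)) {τ : ℝ}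
    (hI : ∀ v ∈ I, relHammingDist (sliceAt r v.1 v.2) (sliceAt w v.1 v.2) ≤ τ) :
    relHammingDist r w ≤ 1 - (#I / ((m + 1) * n)) * (1 - τ) := by
  rcases n.eq_zero_or_pos with rfl | hn
  · simpa using relHammingDist_le_one r w
  set δ : Fin (m + 1) × Fin n → ℝ := fun v => relHammingDist (sliceAt r v.1 v.2) (sliceAt w v.1 v.2)
  have hrow (b : Fin (m + 1)) : ∑ i, δ (b, i) = n * relHammingDist r w := by
    simp only [δ, relHammingDist, ← sum_div, ← Nat.cast_sum, sum_hammingDist_sliceAt]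
    simp only [Fintype.card_pi, Fintype.card_fin, prod_const, card_univ]
    field_simp
    push_cast
    ring
  have hlow : #I * (1 - τ) ≤ ∑ v ∈ I, (1 - δ v) := by
    simpa using card_nsmul_le_sum I (fun v => 1 - δ v) (1 - τ) fun v hv => by linarith [hI v hv]
  have hup : ∑ v ∈ I, (1 - δ v) ≤ ∑ v, (1 - δ v) :=
    sum_le_univ_sum_of_nonneg fun v => sub_nonneg.2 (relHammingDist_le_one _ _)
  have htotal : ∑ v, (1 - δ v) = (m + 1) * (n * (1 - relHammingDist r w)) := by
    simp only [sum_sub_distrib, sum_const, card_univ, Fintype.card_prod, Fintype.card_fin,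
      nsmul_eq_mul, Nat.cast_mul, Nat.cast_add, Nat.cast_one, mul_one, Fintype.sum_prod_type, hrow]
    ring
  rw [div_mul_eq_mul_div, le_sub_comm, div_le_iff₀ (by positivity)]
  linarith

end Counting

section Inconsistency

variable {F : Type} [Fintype F] [DecidableEq F] {n mm : ℕ} {C : Set (Fin n → F)}
  {r : (Fin (mm + 3) → Fin n) → F} {τ : ℝ} {c : Fin (mm + 3) → Fin n → (Fin (mm + 2) → Fin n) → F}
  {v w : Fin (mm + 3) × Fin n}

lemma distToCode_sliceAt_le_of_not_inconsAdj (h : ¬ InconsAdj C r τ c v w) :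
    distToCode (tensorPow C (mm + 2)) (sliceAt r v.1 v.2) ≤ τ :=
  not_lt.1 fun hlt => h (Or.inl hlt)

lemma slicesAgree_of_not_inconsAdj (h : ¬ InconsAdj C r τ c v w) (hvw : v.1 ≠ w.1) :
    SlicesAgree c v w :=
  fun x hxv hxw => by_contra fun hne => h (Or.inr (Or.inr ⟨hvw, x, hxv, hxw, hne⟩))

end Inconsistency

theorem independent_set_proximity_general
    {F : Type} [Field F] [Fintype F] [DecidableEq F] {n d mm : ℕ}
    (C : Submodule F (Fin n → F))
    (hd : minDist (C : Set (Fin n → F)) = d)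
    (r : (Fin (mm + 3) → Fin n) → F) (τ : ℝ)
    (c : ∀ (_ : Fin (mm + 3)) (_ : Fin n), (Fin (mm + 2) → Fin n) → F)
    (hcmem : ∀ b i, c b i ∈ tensorPow (C : Set (Fin n → F)) (mm + 2))
    (hclosest : ∀ b i, relHammingDist (sliceAt r b i) (c b i) =
      distToCode (tensorPow (C : Set (Fin n → F)) (mm + 2)) (sliceAt r b i))
    (I : Finset (Fin (mm + 3) × Fin n))
    (hind : ∀ v ∈ I, ∀ w ∈ I, v ≠ w → ¬ InconsAdj (C : Set (Fin n → F)) r τ c v w)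
    (hcard : (mm + 3) * (n - d) + d + 1 ≤ I.card) :
    distToCode (tensorPow (C : Set (Fin n → F)) (mm + 3)) r ≤
      1 - ((I.card : ℝ) / ((mm + 3) * n)) * (1 - τ) := by
  obtain ⟨b₁, b₂, hb, h₁, h₂⟩ := exists_ne_lt_card_fiber I (n - d) (by
    have : (mm + 3) * (n - d) = (mm + 2) * (n - d) + (n - d) := by ring
    simp only [Fintype.card_fin, Nat.add_succ_sub_one]
    omega)
  obtain ⟨w, hw, hslice⟩ := exists_mem_tensorPow_sliceAt_eq C c I (fun v _ => hcmem v.1 v.2)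
    (fun v hv u hu hvu => slicesAgree_of_not_inconsAdj (hind v hv u hu (ne_of_apply_ne _ hvu)) hvu)
    hb (by omega) (by omega)
  have hI : 1 < #I := by
    obtain ⟨i₁, hi₁⟩ := card_pos.1 (Nat.zero_lt_of_lt h₁)
    obtain ⟨i₂, hi₂⟩ := card_pos.1 (Nat.zero_lt_of_lt h₂)
    exact one_lt_card.2 ⟨_, (mem_filter.1 hi₁).2, _, (mem_filter.1 hi₂).2, by simp [hb]⟩
  have hclose (v) (hv : v ∈ I) :
      relHammingDist (sliceAt r v.1 v.2) (sliceAt w v.1 v.2) ≤ τ := by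
    -- adjacency tests the distance of each endpoint, so any second vertex of `I` certifies it
    obtain ⟨u, hu, huv⟩ := exists_mem_ne hI v
    rw [hslice v hv, hclosest]
    exact distToCode_sliceAt_le_of_not_inconsAdj (hind v hv u hu huv.symm)
  calc distToCode _ r ≤ relHammingDist r w := distToCode_le_relHammingDist r hw
    _ ≤ _ := relHammingDist_le_of_sliceAt r w I hclose
    _ = _ := by push_cast; ring_nf

/-- Independent sets give proximity. With `C` an `[n,k,d]` code, ambient
dimension `m = mm+3 ≥ 3`, `r`, threshold `τ`, and closest-codeword assignments
`c b i ∈ C^{m-1}` as above: if the inconsistency graph has an independent set `I` of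
size at least `m(n−d) + d + 1`, then `δ_{C^m}(r) ≤ 1 − (|I|/(mn))·(1 − τ)`. -/
theorem independent_set_proximity
    {F : Type} [Field F] [Fintype F] [DecidableEq F] {n k d mm : ℕ}
    (C : Submodule F (Fin n → F))
    (hk : Module.finrank F C = k)
    (hd : minDist (C : Set (Fin n → F)) = d) (hdn : d ≤ n)
    (r : (Fin (mm + 3) → Fin n) → F) (τ : ℝ) (h0τ : 0 ≤ τ) (hτ1 : τ ≤ 1)
    (c : ∀ (_ : Fin (mm + 3)) (_ : Fin n), (Fin (mm + 2) → Fin n) → F)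
    (hcmem : ∀ b i, c b i ∈ tensorPow (C : Set (Fin n → F)) (mm + 2))
    (hclosest : ∀ b i, relHammingDist (sliceAt r b i) (c b i) =
      distToCode (tensorPow (C : Set (Fin n → F)) (mm + 2)) (sliceAt r b i))
    (I : Finset (Fin (mm + 3) × Fin n))
    (hind : ∀ v ∈ I, ∀ w ∈ I, v ≠ w → ¬ InconsAdj (C : Set (Fin n → F)) r τ c v w)
    (hcard : (mm + 3) * (n - d) + d + 1 ≤ I.card) :
    distToCode (tensorPow (C : Set (Fin n → F)) (mm + 3)) r ≤
      1 - ((I.card : ℝ) / ((mm + 3) * n)) * (1 - τ) :=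
  independent_set_proximity_general C hd r τ c hcmem hclosest I hind hcard
end
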